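/- arXiv:2301.05962 — 3 statements merged into one kernel-verified Lean document; each statement's English description precedes it below -/
import Mathlib

section
/- Let 1 ≤ p < ∞, let X_N be an N-dimensional subspace of C(Ω), let ξ = (ξ¹,…,ξ^m) ∈ Ω^m and let w = (w_1,…,w_m) be positive weights. Assume (A1) there is C₁ > 0 with C₁‖u‖_{L_p(Ω,μ)} ≤ (Σ_{ν=1}^m w_ν |u(ξ^ν)|^p)^{1/p} for all u ∈ X_N, and (A2) Σ_{ν=1}^m w_ν ≤ C₂. Then for every f ∈ C(Ω) and every u* ∈ X_N minimizing (Σ_{ν=1}^m w_ν |f(ξ^ν) − u(ξ^ν)|^p)^{1/p} over u ∈ X_N, one has ‖f − u*‖_{L_p(Ω,μ)} ≤ 2^{1/p}(2C₁^{-1}C₂^{1/p} + 1) · inf_{g∈X_N} ‖f − g‖_{L_p(Ω, μ_{w,ξ})}, where μ_{w,ξ} = (1/2)μ + (1/(2‖w‖₁)) Σ_{j=1}^m w_j δ_{ξ^j} and ‖w‖₁ = Σ_{j=1}^m w_j. -/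
/-!
Fix `g ∈ X`. By Minkowski, `‖f - u*‖_μ ≤ ‖f - g‖_μ + ‖u* - g‖_μ`; (A1) bounds `‖u* - g‖_μ` by
`C₁⁻¹` times the discrete norm of `u* - g`, and minimality of `u*` makes the latter at most
twice the discrete norm of `f - g`. The discrete norm is the `L_p` norm for `ρ = ∑ w_j δ_{ξ^j}`,
and `μ ≤ 2 μ_{w,ξ}`, `ρ ≤ 2‖w‖₁ μ_{w,ξ}` as measures, so both terms are controlled by
`‖f - g‖_{L_p(μ_{w,ξ})}`.
-/

open MeasureTheory

noncomputable section

/-- The `L_p(Ω,μ)` norm `(∫_Ω |f|^p dμ)^{1/p}` of a complex-valued function. -/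
def lpNorm {Ω : Type*} [MeasurableSpace Ω] (μ : Measure Ω) (p : ℝ) (f : Ω → ℂ) : ℝ :=
  (∫ x, ‖f x‖ ^ p ∂μ) ^ (1 / p)

open scoped ENNReal

section Lp

theorem lpNorm_eq_toReal_eLpNorm {α : Type*} [MeasurableSpace α] {p : ℝ} {τ : Measure α}
    {f : α → ℂ} (hp : 0 < p) (hf : MemLp f (ENNReal.ofReal p) τ) :
    lpNorm τ p f = (eLpNorm f (ENNReal.ofReal p) τ).toReal := by
  rw [hf.eLpNorm_eq_integral_rpow_norm (by simpa using hp) ENNReal.ofReal_ne_top,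
    ENNReal.toReal_ofReal (by positivity), ENNReal.toReal_ofReal hp.le, _root_.lpNorm, one_div]

theorem lpNorm_nonneg {α : Type*} [MeasurableSpace α] (τ : Measure α) (p : ℝ) (f : α → ℂ) :
    0 ≤ lpNorm τ p f :=
  Real.rpow_nonneg (integral_nonneg fun _ => by positivity) _

variable {α : Type*} [TopologicalSpace α] [CompactSpace α] [MeasurableSpace α]
  [OpensMeasurableSpace α] {p : ℝ}

theorem ContinuousMap.memLp_of_compactSpace (τ : Measure α) [IsFiniteMeasure τ] (g : C(α, ℂ))
    (q : ℝ≥0∞) : MemLp g q τ :=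
  .of_bound g.continuous.aestronglyMeasurable ‖g‖ (.of_forall g.norm_coe_le_norm)

theorem lpNorm_sub_le (τ : Measure α) [IsFiniteMeasure τ] (hp : 1 ≤ p) (a b : C(α, ℂ)) :
    lpNorm τ p ⇑(a - b) ≤ lpNorm τ p a + lpNorm τ p b := by
  have hp0 : 0 < p := by linarith
  have ha := a.memLp_of_compactSpace τ (ENNReal.ofReal p)
  have hb := b.memLp_of_compactSpace τ (ENNReal.ofReal p)
  rw [ContinuousMap.coe_sub, lpNorm_eq_toReal_eLpNorm hp0 ha, lpNorm_eq_toReal_eLpNorm hp0 hb,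
    lpNorm_eq_toReal_eLpNorm hp0 (ha.sub hb),
    ← ENNReal.toReal_add ha.eLpNorm_ne_top hb.eLpNorm_ne_top]
  exact ENNReal.toReal_mono (ENNReal.add_ne_top.2 ⟨ha.eLpNorm_ne_top, hb.eLpNorm_ne_top⟩)
    (eLpNorm_sub_le ha.1 hb.1 (by simpa using hp))

theorem lpNorm_le_of_measure_le_smul {τ ν : Measure α} [IsFiniteMeasure ν] {c : ℝ≥0∞}
    (hc : c ≠ ∞) (hτν : τ ≤ c • ν) (hp : 0 < p) (g : C(α, ℂ)) :
    lpNorm τ p g ≤ c.toReal ^ (1 / p) * lpNorm ν p g := by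
  have hg := g.memLp_of_compactSpace ν (ENNReal.ofReal p)
  rw [lpNorm_eq_toReal_eLpNorm hp hg, lpNorm_eq_toReal_eLpNorm hp (hg.of_measure_le_smul hc hτν),
    ENNReal.toReal_rpow, ← ENNReal.toReal_mul]
  refine ENNReal.toReal_mono (ENNReal.mul_ne_top (by simp [hc, hp.le]) hg.eLpNorm_ne_top) ?_
  simpa [ENNReal.toReal_ofReal hp.le] using
    eLpNorm_le_of_measure_le_smul hτν (f := g) (p := ENNReal.ofReal p)

theorem lpNorm_sub_le_of_discrete_minimizer {μ ρ : Measure α} [IsFiniteMeasure μ]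
    [IsFiniteMeasure ρ] (hp : 1 ≤ p) {X : Submodule ℂ C(α, ℂ)} {C₁ : ℝ} (hC₁ : 0 < C₁)
    (hdisc : ∀ u ∈ X, C₁ * lpNorm μ p u ≤ lpNorm ρ p u) {f u g : C(α, ℂ)} (hu : u ∈ X)
    (hg : g ∈ X) (hmin : lpNorm ρ p ⇑(f - u) ≤ lpNorm ρ p ⇑(f - g)) :
    lpNorm μ p ⇑(f - u) ≤ lpNorm μ p ⇑(f - g) + 2 * C₁⁻¹ * lpNorm ρ p ⇑(f - g) := by
  have hug : C₁ * lpNorm μ p ⇑(u - g) ≤ 2 * lpNorm ρ p ⇑(f - g) :=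
    calc C₁ * lpNorm μ p ⇑(u - g) ≤ lpNorm ρ p ⇑(u - g) := hdisc _ (X.sub_mem hu hg)
      _ = lpNorm ρ p ⇑((f - g) - (f - u)) := by rw [sub_sub_sub_cancel_left]
      _ ≤ lpNorm ρ p ⇑(f - g) + lpNorm ρ p ⇑(f - u) := lpNorm_sub_le ρ hp _ _
      _ ≤ 2 * lpNorm ρ p ⇑(f - g) := by linarith
  calc lpNorm μ p ⇑(f - u) = lpNorm μ p ⇑((f - g) - (u - g)) := by rw [sub_sub_sub_cancel_right]
    _ ≤ lpNorm μ p ⇑(f - g) + lpNorm μ p ⇑(u - g) := lpNorm_sub_le μ hp _ _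
    _ ≤ lpNorm μ p ⇑(f - g) + 2 * C₁⁻¹ * lpNorm ρ p ⇑(f - g) := by
      gcongr
      rwa [mul_right_comm, ← div_eq_mul_inv, le_div_iff₀' hC₁]

end Lp

section WeightedDirac

variable {α ι : Type*} [MeasurableSpace α] [Fintype ι]

def weightedDirac (ξ : ι → α) (w : ι → ℝ) : Measure α :=
  ∑ j, ENNReal.ofReal (w j) • Measure.dirac (ξ j)

instance (ξ : ι → α) (w : ι → ℝ) : IsFiniteMeasure (weightedDirac ξ w) := by
  refine ⟨?_⟩
  simp [weightedDirac, ENNReal.sum_lt_top]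

theorem smul_weightedDirac {c : ℝ} (hc : 0 ≤ c) (ξ : ι → α) (w : ι → ℝ) :
    ENNReal.ofReal c • weightedDirac ξ w = weightedDirac ξ (fun j => c * w j) := by
  simp only [weightedDirac, Finset.smul_sum, smul_smul, ENNReal.ofReal_mul hc]

theorem lpNorm_weightedDirac [TopologicalSpace α] [OpensMeasurableSpace α] (ξ : ι → α)
    {w : ι → ℝ} (hw : ∀ j, 0 ≤ w j) (p : ℝ) (g : C(α, ℂ)) :
    lpNorm (weightedDirac ξ w) p g = (∑ j, w j * ‖g (ξ j)‖ ^ p) ^ (1 / p) := by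
  have hmeas : StronglyMeasurable fun x => ‖g x‖ ^ p :=
    (g.continuous.measurable.norm.pow_const p).stronglyMeasurable
  have hint : ∀ j, Integrable (fun x => ‖g x‖ ^ p) (ENNReal.ofReal (w j) • Measure.dirac (ξ j)) :=
    fun j => (integrable_dirac' hmeas enorm_lt_top).smul_measure ENNReal.ofReal_ne_top
  rw [_root_.lpNorm, weightedDirac, integral_finsetSum_measure fun j _ => hint j]
  simp_rw [integral_smul_measure, integral_dirac' _ _ hmeas, ENNReal.toReal_ofReal (hw _),
    smul_eq_mul]

theorem le_two_smul_half_smul_add (μ ρ : Measure α) :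
    μ ≤ (2 : ℝ≥0∞) • ((1 / 2 : ℝ≥0∞) • μ + ρ) := by
  rw [smul_add, smul_smul, one_div, ENNReal.mul_inv_cancel two_ne_zero ENNReal.ofNat_ne_top,
    one_smul]
  exact Measure.le_add_right le_rfl

theorem weightedDirac_le_smul_half_smul_add (μ : Measure α) (ξ : ι → α) {w : ι → ℝ}
    (hw : ∀ j, 0 ≤ w j) :
    weightedDirac ξ w ≤ ENNReal.ofReal (2 * ∑ i, w i) •
      ((1 / 2 : ℝ≥0∞) • μ + weightedDirac ξ (fun j => w j / (2 * ∑ i, w i))) := by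
  have hW : 0 ≤ 2 * ∑ i, w i := mul_nonneg zero_le_two (Finset.sum_nonneg fun i _ => hw i)
  rw [smul_add, smul_weightedDirac hW]
  refine Measure.le_add_left (le_of_eq (congrArg _ (funext fun j => ?_)))
  rcases hW.eq_or_lt with hW0 | hWpos
  · have : w j = 0 := (Finset.sum_eq_zero_iff_of_nonneg fun i _ => hw i).1 (by linarith) j
      (Finset.mem_univ j)
    simp [this]
  · exact (mul_div_cancel₀ _ hWpos.ne').symm

end WeightedDirac

theorem stmt0_general {d : ℕ} (Ω : Set (Fin d → ℝ)) [CompactSpace Ω]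
    (μ : Measure Ω) [IsProbabilityMeasure μ]
    (p : ℝ) (hp : 1 ≤ p)
    (X : Submodule ℂ C(Ω, ℂ))
    (m : ℕ) (ξ : Fin m → Ω) (w : Fin m → ℝ) (hw : ∀ j, 0 < w j)
    (C₁ C₂ : ℝ) (hC₁ : 0 < C₁)
    -- Assumption A1 (discretization)
    (hA1 : ∀ u : C(Ω, ℂ), u ∈ X →
      C₁ * lpNorm μ p ⇑u ≤ (∑ j, w j * ‖u (ξ j)‖ ^ p) ^ (1 / p))
    -- Assumption A2 (weights)
    (hA2 : ∑ j, w j ≤ C₂)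
    (f : C(Ω, ℂ)) (ustar : C(Ω, ℂ)) (hu : ustar ∈ X)
    -- `ustar` minimizes the weighted discrete `ℓ_p` error over `X`
    (hmin : ∀ u : C(Ω, ℂ), u ∈ X →
      (∑ j, w j * ‖f (ξ j) - ustar (ξ j)‖ ^ p) ^ (1 / p) ≤
        (∑ j, w j * ‖f (ξ j) - u (ξ j)‖ ^ p) ^ (1 / p)) :
    lpNorm μ p ⇑(f - ustar) ≤
      (2 : ℝ) ^ (1 / p) * (2 * C₁⁻¹ * C₂ ^ (1 / p) + 1) *
        ⨅ g : X, lpNorm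
          ((1 / 2 : ENNReal) • μ +
            ∑ j, ENNReal.ofReal (w j / (2 * ∑ i, w i)) • Measure.dirac (ξ j))
          p ⇑(f - (g : C(Ω, ℂ))) := by
  have hp0 : 0 < p := by linarith
  have hw0 : ∀ j, 0 ≤ w j := fun j => (hw j).le
  have hW : 0 ≤ ∑ j, w j := Finset.sum_nonneg fun j _ => hw0 j
  have hC₂ : 0 ≤ C₂ := hW.trans hA2
  change _ ≤ _ * ⨅ g : X, lpNorm
    ((1 / 2 : ℝ≥0∞) • μ + weightedDirac ξ (fun j => w j / (2 * ∑ i, w i))) p _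
  set ρ := weightedDirac ξ w
  set ν := (1 / 2 : ℝ≥0∞) • μ + weightedDirac ξ (fun j => w j / (2 * ∑ i, w i))
  have : IsFiniteMeasure ((1 / 2 : ℝ≥0∞) • μ) := μ.smul_finite (by simp)
  have hρ : ∀ h : C(Ω, ℂ), lpNorm ρ p h = (∑ j, w j * ‖h (ξ j)‖ ^ p) ^ (1 / p) :=
    lpNorm_weightedDirac ξ hw0 p
  have hμν (h : C(Ω, ℂ)) : lpNorm μ p h ≤ 2 ^ (1 / p) * lpNorm ν p h := by
    simpa only [ENNReal.toReal_ofNat] using lpNorm_le_of_measure_le_smul ENNReal.ofNat_ne_top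
      (le_two_smul_half_smul_add μ (weightedDirac ξ fun j => w j / (2 * ∑ i, w i))) hp0 h
  have hρν (h : C(Ω, ℂ)) : lpNorm ρ p h ≤ (2 * C₂) ^ (1 / p) * lpNorm ν p h := by
    refine (lpNorm_le_of_measure_le_smul ENNReal.ofReal_ne_top
      (weightedDirac_le_smul_half_smul_add μ ξ hw0) hp0 h).trans ?_
    rw [ENNReal.toReal_ofReal (by positivity)]
    gcongr
    exact lpNorm_nonneg _ _ _
  have hK : 0 ≤ (2 : ℝ) ^ (1 / p) * (2 * C₁⁻¹ * C₂ ^ (1 / p) + 1) := by positivity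
  rw [Real.mul_iInf_of_nonneg hK]
  refine le_ciInf fun g => ?_
  calc lpNorm μ p ⇑(f - ustar)
      ≤ lpNorm μ p ⇑(f - g) + 2 * C₁⁻¹ * lpNorm ρ p ⇑(f - g) :=
        lpNorm_sub_le_of_discrete_minimizer hp hC₁ (fun u hu => (hρ u).symm ▸ hA1 u hu) hu g.2
          (by simpa only [hρ, ContinuousMap.sub_apply] using hmin g g.2)
    _ ≤ 2 ^ (1 / p) * lpNorm ν p ⇑(f - g) +
          2 * C₁⁻¹ * ((2 * C₂) ^ (1 / p) * lpNorm ν p ⇑(f - g)) := by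
        gcongr
        exacts [hμν _, hρν _]
    _ = _ := by rw [Real.mul_rpow zero_le_two hC₂]; ring

/-- error bound for the weighted least squares recovery operator
in terms of best approximation in `L_p(Ω, μ_{w,ξ})`. -/
theorem stmt0 {d : ℕ} (Ω : Set (Fin d → ℝ)) [CompactSpace Ω] (hΩ : IsCompact Ω)
    (μ : Measure Ω) [IsProbabilityMeasure μ]
    (p : ℝ) (hp : 1 ≤ p)
    (N : ℕ) (X : Submodule ℂ C(Ω, ℂ)) (hX : Module.finrank ℂ X = N)
    (m : ℕ) (ξ : Fin m → Ω) (w : Fin m → ℝ) (hw : ∀ j, 0 < w j)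
    (C₁ C₂ : ℝ) (hC₁ : 0 < C₁)
    -- Assumption A1 (discretization)
    (hA1 : ∀ u : C(Ω, ℂ), u ∈ X →
      C₁ * lpNorm μ p ⇑u ≤ (∑ j, w j * ‖u (ξ j)‖ ^ p) ^ (1 / p))
    -- Assumption A2 (weights)
    (hA2 : ∑ j, w j ≤ C₂)
    (f : C(Ω, ℂ)) (ustar : C(Ω, ℂ)) (hu : ustar ∈ X)
    -- `ustar` minimizes the weighted discrete `ℓ_p` error over `X`
    (hmin : ∀ u : C(Ω, ℂ), u ∈ X →
      (∑ j, w j * ‖f (ξ j) - ustar (ξ j)‖ ^ p) ^ (1 / p) ≤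
        (∑ j, w j * ‖f (ξ j) - u (ξ j)‖ ^ p) ^ (1 / p)) :
    lpNorm μ p ⇑(f - ustar) ≤
      (2 : ℝ) ^ (1 / p) * (2 * C₁⁻¹ * C₂ ^ (1 / p) + 1) *
        ⨅ g : X, lpNorm
          ((1 / 2 : ENNReal) • μ +
            ∑ j, ENNReal.ofReal (w j / (2 * ∑ i, w i)) • Measure.dirac (ξ j))
          p ⇑(f - (g : C(Ω, ℂ))) :=
  stmt0_general Ω μ p hp X m ξ w hw C₁ C₂ hC₁ hA1 hA2 f ustar hu hmin
end
end

section
/- Let 1 ≤ p < ∞, let X_N be an N-dimensional subspace of C(Ω), let ξ = (ξ¹,…,ξ^m) ∈ Ω^m and let w = (w_1,…,w_m) be positive weights. Assume (A1) there is C₁ > 0 with C₁‖u‖_{L_p(Ω,μ)} ≤ (Σ_{ν=1}^m w_ν |u(ξ^ν)|^p)^{1/p} for all u ∈ X_N, and (A2) Σ_{ν=1}^m w_ν ≤ C₂. Then for every f ∈ C(Ω) and every u* ∈ X_N minimizing (Σ_{ν=1}^m w_ν |f(ξ^ν) − u(ξ^ν)|^p)^{1/p} over u ∈ X_N, one has ‖f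 − u*‖_{L_p(Ω,μ)} ≤ (2C₁^{-1}C₂^{1/p} + 1) · inf_{g∈X_N} ‖f − g‖_∞. -/
/-!
The weighted sum `(∑ⱼ wⱼ |h(ξⱼ)|^p)^(1/p)` is the `L_p` norm of `h` for the discrete measure
`ν = ∑ⱼ wⱼ δ_{ξⱼ}`, whose total mass is at most `C₂`, so `‖h‖_{L_p(ν)} ≤ C₂^(1/p) ‖h‖_∞`.
For any `g ∈ X`, apply (A1) to `g - u* ∈ X`, then the triangle inequality in `L_p(ν)` and the
minimality of `u*`: `C₁ ‖g - u*‖_{L_p(μ)} ≤ ‖f - u*‖_{L_p(ν)} + ‖f - g‖_{L_p(ν)}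
≤ 2 C₂^(1/p) ‖f - g‖_∞`. The triangle inequality in `L_p(μ)` through `g` finishes the proof.
-/

open MeasureTheory

noncomputable section

open Set
open scoped ENNReal

-- Under `open MeasureTheory` the bare name `lpNorm` is ambiguous with the definition above.
section

variable {α E : Type*} [MeasurableSpace α] [NormedAddCommGroup E] {μ : Measure α} {p : ℝ≥0∞}

theorem lpNorm_le_mul_measureReal_rpow [IsFiniteMeasure μ] (hp : p ≠ 0) {f : α → E} {C : ℝ}
    (hC : 0 ≤ C) (hfC : ∀ x, ‖f x‖ ≤ C) :
    MeasureTheory.lpNorm f p μ ≤ C * μ.real univ ^ p.toReal⁻¹ := by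
  rcases eq_or_ne μ 0 with rfl | hμ
  · simp only [lpNorm_measure_zero]
    positivity
  calc MeasureTheory.lpNorm f p μ ≤ MeasureTheory.lpNorm (fun _ => C) p μ :=
        lpNorm_mono_real (memLp_const C) hfC
    _ = C * μ.real univ ^ p.toReal⁻¹ := by rw [lpNorm_const hp hμ, Real.norm_of_nonneg hC]

variable [TopologicalSpace α] [CompactSpace α] [BorelSpace α] [NormedSpace ℝ E]
  [SecondCountableTopologyEither α E]

theorem lpNorm_sub_le_of_discretization {ν : Measure α} [IsProbabilityMeasure μ]
    [IsFiniteMeasure ν] (hp : 1 ≤ p) {C₁ C₂ : ℝ} (hC₁ : 0 < C₁) (hν : ν.real univ ≤ C₂)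
    {f u g : C(α, E)}
    (hA1 : C₁ * MeasureTheory.lpNorm ⇑(g - u) p μ ≤ MeasureTheory.lpNorm ⇑(g - u) p ν)
    (hmin : MeasureTheory.lpNorm ⇑(f - u) p ν ≤ MeasureTheory.lpNorm ⇑(f - g) p ν) :
    MeasureTheory.lpNorm ⇑(f - u) p μ ≤ (2 * C₁⁻¹ * C₂ ^ p.toReal⁻¹ + 1) * ‖f - g‖ := by
  have : Fact (1 ≤ p) := ⟨hp⟩
  have hp₀ : p ≠ 0 := (zero_lt_one.trans_le hp).ne'
  have hfgμ : MeasureTheory.lpNorm ⇑(f - g) p μ ≤ ‖f - g‖ := by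
    simpa using
      lpNorm_le_mul_measureReal_rpow (μ := μ) hp₀ (norm_nonneg _) (f - g).norm_coe_le_norm
  have hfgν : MeasureTheory.lpNorm ⇑(f - g) p ν ≤ ‖f - g‖ * C₂ ^ p.toReal⁻¹ :=
    (lpNorm_le_mul_measureReal_rpow hp₀ (norm_nonneg _) (f - g).norm_coe_le_norm).trans <|
      by gcongr
  have hgu : C₁ * MeasureTheory.lpNorm ⇑(g - u) p μ ≤ 2 * (‖f - g‖ * C₂ ^ p.toReal⁻¹) :=
    calc C₁ * MeasureTheory.lpNorm ⇑(g - u) p μ ≤ MeasureTheory.lpNorm ⇑(g - u) p ν := hA1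
      _ ≤ MeasureTheory.lpNorm ⇑(f - u) p ν + MeasureTheory.lpNorm ⇑(f - g) p ν := by
        simpa using lpNorm_sub_le (ContinuousMap.memLp ν ℝ (f - u)) hp (g := ⇑(f - g))
      _ ≤ 2 * (‖f - g‖ * C₂ ^ p.toReal⁻¹) := by linarith
  calc MeasureTheory.lpNorm ⇑(f - u) p μ
      ≤ MeasureTheory.lpNorm ⇑(f - g) p μ + MeasureTheory.lpNorm ⇑(g - u) p μ := by
        simpa using lpNorm_add_le (ContinuousMap.memLp μ ℝ (f - g)) hp (g := ⇑(g - u))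
    _ ≤ ‖f - g‖ + C₁⁻¹ * (2 * (‖f - g‖ * C₂ ^ p.toReal⁻¹)) := by
        gcongr
        rwa [le_inv_mul_iff₀ hC₁]
    _ = (2 * C₁⁻¹ * C₂ ^ p.toReal⁻¹ + 1) * ‖f - g‖ := by ring

end

theorem lpNorm_eq_lpNorm_ofReal {α : Type*} [MeasurableSpace α] {μ : Measure α} {p : ℝ}
    (hp : 0 < p) {f : α → ℂ} (hf : AEStronglyMeasurable f μ) :
    lpNorm μ p f = MeasureTheory.lpNorm f (ENNReal.ofReal p) μ := by
  rw [lpNorm_eq_integral_norm_rpow_toReal (by simpa using hp) ENNReal.ofReal_ne_top hf,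
    ENNReal.toReal_ofReal hp.le, _root_.lpNorm, one_div]

theorem lpNorm_sum_dirac {α ι : Type*} [MeasurableSpace α] [MeasurableSingletonClass α]
    [Fintype ι] (ξ : ι → α) {w : ι → ℝ} (hw : ∀ j, 0 ≤ w j) (p : ℝ) (f : α → ℂ) :
    lpNorm (∑ j, (w j).toNNReal • Measure.dirac (ξ j)) p f =
      (∑ j, w j * ‖f (ξ j)‖ ^ p) ^ (1 / p) := by
  rw [_root_.lpNorm, integral_finsetSum_measure]
  · simp [NNReal.smul_def, Real.coe_toNNReal _ (hw _)]
  exact fun j _ => (integrable_dirac (by simp)).smul_measure (by simp)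

theorem stmt1_general {d : ℕ} (Ω : Set (Fin d → ℝ)) [CompactSpace Ω]
    (μ : Measure Ω) [IsProbabilityMeasure μ]
    (p : ℝ) (hp : 1 ≤ p)
    (X : Submodule ℂ C(Ω, ℂ))
    (m : ℕ) (ξ : Fin m → Ω) (w : Fin m → ℝ) (hw : ∀ j, 0 < w j)
    (C₁ C₂ : ℝ) (hC₁ : 0 < C₁)
    -- Assumption A1 (discretization)
    (hA1 : ∀ u : C(Ω, ℂ), u ∈ X →
      C₁ * lpNorm μ p ⇑u ≤ (∑ j, w j * ‖u (ξ j)‖ ^ p) ^ (1 / p))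
    -- Assumption A2 (weights)
    (hA2 : ∑ j, w j ≤ C₂)
    (f : C(Ω, ℂ)) (ustar : C(Ω, ℂ)) (hu : ustar ∈ X)
    -- `ustar` minimizes the weighted discrete `ℓ_p` error over `X`
    (hmin : ∀ u : C(Ω, ℂ), u ∈ X →
      (∑ j, w j * ‖f (ξ j) - ustar (ξ j)‖ ^ p) ^ (1 / p) ≤
        (∑ j, w j * ‖f (ξ j) - u (ξ j)‖ ^ p) ^ (1 / p)) :
    lpNorm μ p ⇑(f - ustar) ≤
      (2 * C₁⁻¹ * C₂ ^ (1 / p) + 1) * ⨅ g : X, ‖f - (g : C(Ω, ℂ))‖ := by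
  have hp₀ : 0 < p := zero_lt_one.trans_le hp
  set ν : Measure Ω := ∑ j, (w j).toNNReal • Measure.dirac (ξ j)
  have hν : ν.real univ ≤ C₂ := by
    simpa [ν, Measure.real, ENNReal.toReal_sum, fun j => (hw j).le] using hA2
  have hμ (h : C(Ω, ℂ)) : lpNorm μ p h = MeasureTheory.lpNorm h (.ofReal p) μ :=
    lpNorm_eq_lpNorm_ofReal hp₀ h.continuous.aestronglyMeasurable
  have hsum (h : C(Ω, ℂ)) :
      (∑ j, w j * ‖h (ξ j)‖ ^ p) ^ (1 / p) = MeasureTheory.lpNorm h (.ofReal p) ν := by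
    rw [← lpNorm_sum_dirac ξ (fun j => (hw j).le), lpNorm_eq_lpNorm_ofReal hp₀
      h.continuous.aestronglyMeasurable]
  have hK : 0 ≤ 2 * C₁⁻¹ * C₂ ^ (1 / p) + 1 := by
    have := measureReal_nonneg.trans hν
    positivity
  rw [Real.mul_iInf_of_nonneg hK]
  refine le_ciInf fun g => ?_
  have := lpNorm_sub_le_of_discretization (μ := μ) (ν := ν) (ENNReal.one_le_ofReal.2 hp) hC₁
    hν (f := f) (u := ustar) (g := g) (by rw [← hμ, ← hsum]; exact hA1 _ (X.sub_mem g.2 hu))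
    (by rw [← hsum, ← hsum]; exact hmin g g.2)
  rwa [ENNReal.toReal_ofReal hp₀.le, ← one_div p, ← hμ] at this

/-- error bound for the weighted least squares recovery operator
in terms of best approximation in the uniform norm. -/
theorem stmt1 {d : ℕ} (Ω : Set (Fin d → ℝ)) [CompactSpace Ω] (hΩ : IsCompact Ω)
    (μ : Measure Ω) [IsProbabilityMeasure μ]
    (p : ℝ) (hp : 1 ≤ p)
    (N : ℕ) (X : Submodule ℂ C(Ω, ℂ)) (hX : Module.finrank ℂ X = N)
    (m : ℕ) (ξ : Fin m → Ω) (w : Fin m → ℝ) (hw : ∀ j, 0 < w j)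
    (C₁ C₂ : ℝ) (hC₁ : 0 < C₁)
    -- Assumption A1 (discretization)
    (hA1 : ∀ u : C(Ω, ℂ), u ∈ X →
      C₁ * lpNorm μ p ⇑u ≤ (∑ j, w j * ‖u (ξ j)‖ ^ p) ^ (1 / p))
    -- Assumption A2 (weights)
    (hA2 : ∑ j, w j ≤ C₂)
    (f : C(Ω, ℂ)) (ustar : C(Ω, ℂ)) (hu : ustar ∈ X)
    -- `ustar` minimizes the weighted discrete `ℓ_p` error over `X`
    (hmin : ∀ u : C(Ω, ℂ), u ∈ X →
      (∑ j, w j * ‖f (ξ j) - ustar (ξ j)‖ ^ p) ^ (1 / p) ≤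
        (∑ j, w j * ‖f (ξ j) - u (ξ j)‖ ^ p) ^ (1 / p)) :
    lpNorm μ p ⇑(f - ustar) ≤
      (2 * C₁⁻¹ * C₂ ^ (1 / p) + 1) * ⨅ g : X, ‖f - (g : C(Ω, ℂ))‖ :=
  stmt1_general Ω μ p hp X m ξ w hw C₁ C₂ hC₁ hA1 hA2 f ustar hu hmin
end
end

section
/- Let V be a Banach space continuously embedded in C(Ω) and let W := {f ∈ V : ‖f‖_V ≤ 1} be its unit ball. Then for every integer m ≥ 1, inf_{ξ∈Ω^m} sup { |∫_Ω f dμ| : f ∈ W, f(ξ^ν) = 0 for ν = 1,…,m } = κ_m(W). -/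
/-!
For a bounded functional `L` and finitely many functionals `e ν` on a normed space, Hahn–Banach
shows that the norm of `L` on the common kernel of the `e ν` is the distance from `L` to their
span, and that this distance is attained. For `L` the integration functional and `e ν` the point
evaluations at knots `ξ`, the left-hand side for fixed `ξ` is this norm, while the distance is the
best worst-case error over `W` of a quadrature rule with knots `ξ`; minimising over `ξ` gives
`κ_m(W)`.
-/

open MeasureTheory

noncomputable section

namespace ContinuousMap

variable {X E : Type*} (𝕜 : Type*) [TopologicalSpace X] [CompactSpace X] [MeasurableSpace X]
  [BorelSpace X] [NormedAddCommGroup E] [NormedSpace ℝ E] [CompleteSpace E]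
  [NormedRing 𝕜] [Module 𝕜 E] [IsBoundedSMul 𝕜 E] [SMulCommClass ℝ 𝕜 E]
  [SecondCountableTopologyEither X E]
  (μ : Measure X) [IsFiniteMeasure μ]

def integralCLM : C(X, E) →L[𝕜] E :=
  (L1.integralCLM' 𝕜).comp (toLp 1 μ 𝕜)

@[simp]
theorem integralCLM_apply (f : C(X, E)) : integralCLM 𝕜 μ f = ∫ x, f x ∂μ := by
  rw [integralCLM, ContinuousLinearMap.comp_apply, ← L1.integral_eq', L1.integral_eq_integral]
  exact integral_congr_ae (coeFn_toLp μ f)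

end ContinuousMap

namespace ContinuousLinearMap

variable {𝕜 E F : Type*} [RCLike 𝕜] [NormedAddCommGroup E] [NormedSpace 𝕜 E]
  [SeminormedAddCommGroup F] [NormedSpace 𝕜 F]

theorem iSup_norm_apply_unitClosedBall (f : E →L[𝕜] F) :
    ⨆ x : {x : E // ‖x‖ ≤ 1}, ‖f x‖ = ‖f‖ := by
  rw [← sSup_unitClosedBall_eq_norm, sSup_image']
  exact (Equiv.subtypeEquivRight fun x => mem_closedBall_zero_iff).symm.iSup_congr fun _ => rfl

variable {ι : Type*} (L : StrongDual 𝕜 E) (e : ι → StrongDual 𝕜 E)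

theorem iSup_norm_apply_unitClosedBall_iInf_ker :
    ⨆ x : {x : E // ‖x‖ ≤ 1 ∧ ∀ i, e i x = 0}, ‖L x‖ =
      ‖L.comp (⨅ i, LinearMap.ker (e i : E →ₗ[𝕜] 𝕜)).subtypeL‖ := by
  rw [← iSup_norm_apply_unitClosedBall]
  exact Equiv.iSup_congr
    { toFun := fun x => ⟨⟨x.1, by simpa [Submodule.mem_iInf] using x.2.2⟩, x.2.1⟩
      invFun := fun x =>
        ⟨x.1, x.2, fun i => LinearMap.mem_ker.1 ((Submodule.mem_iInf _).1 x.1.2 i)⟩ }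
    fun _ => rfl

variable [Fintype ι]

theorem norm_comp_subtypeL_iInf_ker_le (c : ι → 𝕜) :
    ‖L.comp (⨅ i, LinearMap.ker (e i : E →ₗ[𝕜] 𝕜)).subtypeL‖ ≤ ‖L - ∑ i, c i • e i‖ := by
  set N := ⨅ i, LinearMap.ker (e i : E →ₗ[𝕜] 𝕜)
  have hN : L.comp N.subtypeL = (L - ∑ i, c i • e i).comp N.subtypeL := by
    ext ⟨x, hx⟩
    have hx : ∀ i, e i x = 0 := by simpa [N, Submodule.mem_iInf] using hx
    simp [hx]
  calc ‖L.comp N.subtypeL‖ ≤ ‖L - ∑ i, c i • e i‖ * ‖N.subtypeL‖ := hN ▸ opNorm_comp_le _ _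
    _ ≤ ‖L - ∑ i, c i • e i‖ :=
      mul_le_of_le_one_right (norm_nonneg _) (Submodule.norm_subtypeL_le N)

theorem exists_norm_sub_sum_eq_norm_comp_subtypeL_iInf_ker :
    ∃ c : ι → 𝕜, ‖L - ∑ i, c i • e i‖ =
      ‖L.comp (⨅ i, LinearMap.ker (e i : E →ₗ[𝕜] 𝕜)).subtypeL‖ := by
  set N := ⨅ i, LinearMap.ker (e i : E →ₗ[𝕜] 𝕜)
  obtain ⟨L', hL'N, hL'⟩ := exists_extension_norm_eq N (L.comp N.subtypeL)
  have hker : N ≤ LinearMap.ker ((L - L' : StrongDual 𝕜 E) : E →ₗ[𝕜] 𝕜) :=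
    fun x hx => by simp [hL'N ⟨x, hx⟩]
  obtain ⟨c, hc⟩ :=
    (Submodule.mem_span_range_iff_exists_fun 𝕜).1 (mem_span_of_iInf_ker_le_ker hker)
  refine ⟨c, ?_⟩
  have hL'c : L - ∑ i, c i • e i = L' := by
    ext x
    have hcx : ∑ i, c i * e i x = L x - L' x := by simpa using LinearMap.congr_fun hc x
    simp [hcx]
  rw [hL'c, hL']

theorem iSup_norm_apply_unitClosedBall_iInf_ker_eq_iInf :
    ⨆ x : {x : E // ‖x‖ ≤ 1 ∧ ∀ i, e i x = 0}, ‖L x‖ = ⨅ c : ι → 𝕜, ‖L - ∑ i, c i • e i‖ := by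
  rw [iSup_norm_apply_unitClosedBall_iInf_ker]
  obtain ⟨c, hc⟩ := exists_norm_sub_sum_eq_norm_comp_subtypeL_iInf_ker L e
  exact le_antisymm (le_ciInf (norm_comp_subtypeL_iInf_ker_le L e))
    (hc ▸ ciInf_le ⟨0, by rintro _ ⟨c, rfl⟩; positivity⟩ c)

end ContinuousLinearMap

theorem stmt12_general {d : ℕ} (Ω : Set (Fin d → ℝ)) [CompactSpace Ω]
    (μ : Measure Ω) [IsProbabilityMeasure μ]
    (V : Type) [NormedAddCommGroup V] [NormedSpace ℂ V]
    (ι : V →L[ℂ] C(Ω, ℂ))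
    (m : ℕ) :
    (⨅ ξ : Fin m → Ω,
        ⨆ f : {g : V // ‖g‖ ≤ 1 ∧ ∀ ν, (ι g) (ξ ν) = 0},
          ‖∫ x, (ι (f : V)) x ∂μ‖) =
      ⨅ q : (Fin m → Ω) × (Fin m → ℂ),
        ⨆ f : {g : V // ‖g‖ ≤ 1},
          ‖(∫ x, (ι (f : V)) x ∂μ) - ∑ ν, q.2 ν * (ι (f : V)) (q.1 ν)‖ := by
  let L : StrongDual ℂ V := (ContinuousMap.integralCLM ℂ μ).comp ι
  let e : Ω → StrongDual ℂ V := fun x => (ContinuousMap.evalCLM ℂ x).comp ι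
  have hkernel (ξ : Fin m → Ω) :
      ⨆ f : {g : V // ‖g‖ ≤ 1 ∧ ∀ ν, (ι g) (ξ ν) = 0}, ‖∫ x, (ι (f : V)) x ∂μ‖ =
        ⨅ c : Fin m → ℂ, ‖L - ∑ ν, c ν • e (ξ ν)‖ := by
    rw [← L.iSup_norm_apply_unitClosedBall_iInf_ker_eq_iInf fun ν => e (ξ ν)]
    simp only [L, ContinuousLinearMap.comp_apply, ContinuousMap.integralCLM_apply]
    rfl
  have hquadrature (q : (Fin m → Ω) × (Fin m → ℂ)) :
      ⨆ f : {g : V // ‖g‖ ≤ 1},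
          ‖(∫ x, (ι (f : V)) x ∂μ) - ∑ ν, q.2 ν * (ι (f : V)) (q.1 ν)‖ =
        ‖L - ∑ ν, q.2 ν • e (q.1 ν)‖ := by
    rw [← ContinuousLinearMap.iSup_norm_apply_unitClosedBall]
    refine iSup_congr fun f => ?_
    simp only [L, e, sub_apply, sum_apply, smul_apply, smul_eq_mul,
      ContinuousLinearMap.comp_apply, ContinuousMap.integralCLM_apply,
      ContinuousMap.evalCLM_apply]
  rw [iInf_congr hkernel, iInf_congr hquadrature]
  refine (ciInf_prod (f := fun q : (Fin m → Ω) × (Fin m → ℂ) => ‖L - ∑ ν, q.2 ν • e (q.1 ν)‖)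
    ⟨0, ?_⟩).symm
  rintro _ ⟨q, rfl⟩
  exact norm_nonneg _

/-- for the unit ball `W` of a Banach space `V` continuously embedded
in `C(Ω)`, the optimal error of numerical integration with `m` knots `κ_m(W)` equals
`inf_{ξ∈Ω^m} sup { |∫_Ω f dμ| : f ∈ W, f(ξ^ν) = 0 for all ν }`. -/
theorem stmt12 {d : ℕ} (Ω : Set (Fin d → ℝ)) [CompactSpace Ω] (hΩ : IsCompact Ω)
    (μ : Measure Ω) [IsProbabilityMeasure μ]
    (V : Type) [NormedAddCommGroup V] [NormedSpace ℂ V] [CompleteSpace V]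
    (ι : V →L[ℂ] C(Ω, ℂ)) (hι : Function.Injective ι)
    (m : ℕ) (hm : 1 ≤ m) :
    (⨅ ξ : Fin m → Ω,
        ⨆ f : {g : V // ‖g‖ ≤ 1 ∧ ∀ ν, (ι g) (ξ ν) = 0},
          ‖∫ x, (ι (f : V)) x ∂μ‖) =
      ⨅ q : (Fin m → Ω) × (Fin m → ℂ),
        ⨆ f : {g : V // ‖g‖ ≤ 1},
          ‖(∫ x, (ι (f : V)) x ∂μ) - ∑ ν, q.2 ν * (ι (f : V)) (q.1 ν)‖ :=
  stmt12_general Ω μ V ι m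
end
end
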